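/- Let k ≥ 4 and let (n_1,…,n_k) be an admissible k-tuple of positive integers with [n_1,…,n_k] = 0, having exactly one index j with n_j = 1, and suppose n_1 = 2 and n_k > 2. Then the (k−1)-tuple (n_2,…,n_{k−1}, n_k − 1) is admissible and [n_2,…,n_{k−1}, n_k − 1] = 0. -/

import Mathlib

/-- The continued fraction `[n_1, …, n_k] = n_1 - 1/(n_2 - 1/(… - 1/n_k))`,
computed by the backwards recursion `t_k = n_k`, `t_i = n_i - 1/t_{i+1}`. -/
def cf : List ℚ → ℚ
  | [] => 0
  | [a] => a
  | a :: b :: l => a - 1 / cf (b :: l)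

/-- The continued fraction of a tuple of integers. -/
def cfI (l : List ℤ) : ℚ := cf (l.map (fun n => (n : ℚ)))

/-- A tuple is admissible if every denominator `t_i`, `i = 2, …, k`, appearing in the
backwards recursion computing the continued fraction is positive, i.e. the continued
fraction of every nonempty proper suffix is positive. -/
def Admissible (l : List ℤ) : Prop :=
  ∀ t : List ℤ, t ≠ [] → t ≠ l → t <:+ l → 0 < cfI t

/-- The numerator continuant. -/
def cnt : List ℤ → ℤ
  | [] => 1
  | [a] => a
  | a :: b :: l => a * cnt (b :: l) - cnt l

@[simp] lemma cnt_nil : cnt [] = 1 := rfl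
@[simp] lemma cnt_singleton (a : ℤ) : cnt [a] = a := rfl
lemma cnt_cons_cons (a b : ℤ) (l : List ℤ) :
    cnt (a :: b :: l) = a * cnt (b :: l) - cnt l := rfl

/-- two-step induction principle for lists -/
lemma cnt_ind {P : List ℤ → Prop} (h0 : P []) (h1 : ∀ a, P [a])
    (h2 : ∀ a b l, P (b :: l) → P l → P (a :: b :: l)) (l : List ℤ) : P l := by
  have H : ∀ n (l : List ℤ), l.length ≤ n → P l := by
    intro n
    induction n with
    | zero => intro l hl; cases l with
      | nil => exact h0
      | cons a t => simp at hl
    | succ n ih =>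
      intro l hl
      match l with
      | [] => exact h0
      | [a] => exact h1 a
      | a :: b :: t =>
        have hl1 : (b :: t).length ≤ n := by simp at hl ⊢; omega
        have hl2 : t.length ≤ n := by simp at hl1 ⊢; omega
        exact h2 a b t (ih _ hl1) (ih _ hl2)
  exact H l.length l le_rfl

lemma cnt_cons (a : ℤ) (l : List ℤ) (h : l ≠ []) :
    cnt (a :: l) = a * cnt l - cnt l.tail := by
  cases l with
  | nil => exact absurd rfl h
  | cons b t => rfl

lemma tail_append_singleton (l : List ℤ) (x : ℤ) (h : l ≠ []) :
    (l ++ [x]).tail = l.tail ++ [x] := by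
  cases l with
  | nil => exact absurd rfl h
  | cons b t => rfl

@[simp] lemma cfI_singleton (a : ℤ) : cfI [a] = a := rfl

lemma cfI_cons (a : ℤ) (l : List ℤ) (h : l ≠ []) :
    cfI (a :: l) = a - 1 / cfI l := by
  cases l with
  | nil => exact absurd rfl h
  | cons b t => rfl

/-- Wronskian identity. -/
lemma wronsk (x : ℤ) (l : List ℤ) (h : l ≠ []) :
    cnt l * cnt (l.tail ++ [x]) - cnt (l ++ [x]) * cnt l.tail = 1 := by
  induction l using cnt_ind with
  | h0 => exact absurd rfl h
  | h1 a =>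
    simp only [List.singleton_append, List.nil_append, List.tail_cons, cnt_cons_cons, cnt_singleton, cnt_nil]
    ring
  | h2 a b t ih1 _ =>
    have ih := ih1 (by simp)
    simp only [List.tail_cons, List.cons_append] at ih ⊢
    rw [cnt_cons_cons, cnt_cons_cons a b (t ++ [x])]
    linear_combination ih

/-- last-entry additivity. -/
lemma addlast (x : ℤ) (l : List ℤ) :
    cnt (l ++ [x]) = cnt (l ++ [x - 1]) + cnt l := by
  induction l using cnt_ind with
  | h0 => simp
  | h1 a =>
    simp only [List.singleton_append, cnt_cons_cons, cnt_singleton, cnt_nil]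
    ring
  | h2 a b t ih1 ih2 =>
    simp only [List.cons_append] at ih1 ih2 ⊢
    rw [cnt_cons_cons, cnt_cons_cons, cnt_cons_cons a b t, ih1, ih2]
    ring

/-- cf formula & positivity from admissibility. -/
lemma main1 (l : List ℤ) (hl : l ≠ [])
    (h : ∀ t : List ℤ, t ≠ [] → t <:+ l → 0 < cfI t) :
    0 < cnt l ∧ cfI l = (cnt l : ℚ) / (cnt l.tail : ℚ) := by
  induction l using cnt_ind with
  | h0 => exact absurd rfl hl
  | h1 a =>
    have ha : 0 < cfI [a] := h [a] (by simp) (by simp)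
    simp only [cfI_singleton] at ha
    constructor
    · exact_mod_cast ha
    · simp
  | h2 a b t ih1 ih2 =>
    have hsub : ∀ s : List ℤ, s ≠ [] → s <:+ (b :: t) → 0 < cfI s := by
      intro s hs hsuf
      exact h s hs (hsuf.trans (List.suffix_cons a (b :: t)))
    obtain ⟨hbt_pos, hbt_eq⟩ := ih1 (by simp) hsub
    have ht_pos : 0 < cnt t := by
      cases t with
      | nil => simp
      | cons c' t' =>
        exact (ih2 (by simp) (fun s hs hsuf =>
          hsub s hs (hsuf.trans (List.suffix_cons b _)))).1
    have hbtQ : (0:ℚ) < (cnt (b :: t) : ℚ) := by exact_mod_cast hbt_pos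
    have htQ : (0:ℚ) < (cnt t : ℚ) := by exact_mod_cast ht_pos
    have htail : (b :: t).tail = t := rfl
    rw [htail] at hbt_eq
    have hcf : cfI (a :: b :: t) = a - 1 / cfI (b :: t) := cfI_cons a (b :: t) (by simp)
    have heq : cfI (a :: b :: t) = (cnt (a :: b :: t) : ℚ) / (cnt (b :: t) : ℚ) := by
      rw [hcf, hbt_eq, cnt_cons_cons]
      push_cast
      field_simp
    refine ⟨?_, by simpa using heq⟩
    have hpos : 0 < cfI (a :: b :: t) := h _ (by simp) List.suffix_rfl
    rw [heq] at hpos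
    have := (div_pos_iff.mp hpos)
    rcases this with ⟨h1, _⟩ | ⟨_, h2'⟩
    · exact_mod_cast h1
    · linarith
/-- cf formula from cnt positivity of proper suffixes. -/
lemma main2 (l : List ℤ) (hl : l ≠ [])
    (h : ∀ t : List ℤ, t ≠ [] → t ≠ l → t <:+ l → 0 < cnt t) :
    cfI l = (cnt l : ℚ) / (cnt l.tail : ℚ) := by
  induction l using cnt_ind with
  | h0 => exact absurd rfl hl
  | h1 a => simp
  | h2 a b t ih1 ih2 =>
    have hbt_pos : 0 < cnt (b :: t) :=
      h (b :: t) (by simp) (by simp) (List.suffix_cons a (b :: t))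
    have hsub : ∀ s : List ℤ, s ≠ [] → s ≠ (b :: t) → s <:+ (b :: t) → 0 < cnt s := by
      intro s hs hne hsuf
      refine h s hs ?_ (hsuf.trans (List.suffix_cons a (b :: t)))
      intro heq
      subst heq
      have := List.IsSuffix.length_le hsuf
      simp at this
    have ht_pos : 0 < cnt t := by
      cases t with
      | nil => simp
      | cons c' t' =>
        refine hsub (c' :: t') (by simp) (by simp) (List.suffix_cons b _)
    obtain hbt_eq := ih1 (by simp) hsub
    have hbtQ : (0:ℚ) < (cnt (b :: t) : ℚ) := by exact_mod_cast hbt_pos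
    have htQ : (0:ℚ) < (cnt t : ℚ) := by exact_mod_cast ht_pos
    have htail : (b :: t).tail = t := rfl
    rw [htail] at hbt_eq
    have hcf : cfI (a :: b :: t) = a - 1 / cfI (b :: t) := cfI_cons a (b :: t) (by simp)
    rw [hcf, hbt_eq, List.tail_cons, cnt_cons_cons]
    push_cast
    field_simp

/-- zone b: suffix values with last entry `c-1` are increasing and positive. -/
lemma zb (c : ℤ) (hc : 2 < c) :
    ∀ w : List ℤ, (∀ e ∈ w, 2 ≤ e) →
      0 < cnt ((w ++ [c - 1]).tail) ∧ cnt ((w ++ [c - 1]).tail) < cnt (w ++ [c - 1]) := by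
  intro w
  induction w with
  | nil => intro _; simp; omega
  | cons e w' ih =>
    intro hent
    have he : 2 ≤ e := hent e (by simp)
    obtain ⟨ih1, ih2⟩ := ih (fun x hx => hent x (by simp [hx]))
    have hne : w' ++ [c - 1] ≠ [] := by simp
    have hpos : 0 < cnt (w' ++ [c - 1]) := lt_trans ih1 ih2
    constructor
    · simpa using hpos
    · have hcons : cnt (e :: (w' ++ [c - 1])) =
          e * cnt (w' ++ [c - 1]) - cnt ((w' ++ [c - 1]).tail) := cnt_cons e _ hne
      simp only [List.cons_append, List.tail_cons]
      rw [hcons]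
      nlinarith
/-- zone b without c: positivity and monotonicity. -/
lemma zbM : ∀ w : List ℤ, (∀ e ∈ w, 2 ≤ e) → 0 < cnt w ∧ cnt w.tail ≤ cnt w := by
  intro w
  induction w with
  | nil => intro _; simp
  | cons e w' ih =>
    intro hent
    have he : 2 ≤ e := hent e (by simp)
    obtain ⟨ih1, ih2⟩ := ih (fun x hx => hent x (by simp [hx]))
    cases w' with
    | nil => simp; omega
    | cons f t =>
      have hcons : cnt (e :: (f :: t)) = e * cnt (f :: t) - cnt (f :: t).tail :=
        cnt_cons e _ (by simp)
      rw [List.tail_cons, hcons]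
      constructor
      · nlinarith
      · nlinarith

lemma suffix_append_right' {d a : List ℤ} (m : List ℤ) (h : d <:+ a) : d ++ m <:+ a ++ m := by
  obtain ⟨t, rfl⟩ := h
  exact ⟨t, by simp⟩

lemma suffix_split {w a m : List ℤ} (h : w <:+ a ++ m) :
    w <:+ m ∨ ∃ d, d <:+ a ∧ w = d ++ m := by
  induction a with
  | nil => left; simpa using h
  | cons e a' ih =>
    rw [List.cons_append, List.suffix_cons_iff] at h
    rcases h with rfl | h
    · right; exact ⟨e :: a', List.suffix_rfl, by simp⟩
    · rcases ih h with h1 | ⟨d, hd, rfl⟩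
      · left; exact h1
      · right; exact ⟨d, hd.trans (List.suffix_cons e a'), rfl⟩

lemma proper_suffix_ext {d a : List ℤ} (h : d <:+ a) (hne : d ≠ a) :
    ∃ e, (e :: d) <:+ a := by
  obtain ⟨t, rfl⟩ := h
  cases t with
  | nil => simp at hne
  | cons x t' =>
    rcases List.eq_nil_or_concat (x :: t') with h0 | ⟨t0, e, he⟩
    · simp at h0
    · exact ⟨e, ⟨t0, by rw [he]; simp⟩⟩

/-- forward growth facts (zone a, with last entry c). -/
lemma Gf (b : List ℤ) (c : ℤ) :
    ∀ a : List ℤ, (∀ e ∈ a, 2 ≤ e) →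
      (∀ w, w <:+ a ++ 1 :: b → 0 < cnt (w ++ [c])) →
      cnt ((a ++ 1 :: b) ++ [c]) + 1 ≤ cnt ((a ++ 1 :: b).tail ++ [c]) →
      ∀ d, d <:+ a → cnt ((d ++ 1 :: b) ++ [c]) + 1 ≤ cnt ((d ++ 1 :: b).tail ++ [c]) := by
  intro a
  induction a with
  | nil =>
    intro _ _ hbase d hd
    rw [List.suffix_nil.mp hd]
    exact hbase
  | cons e a' ih =>
    intro hent hposN hbase d hd
    rcases List.suffix_cons_iff.mp hd with rfl | hd'
    · exact hbase
    · have he : 2 ≤ e := hent e (by simp)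
      set m : List ℤ := a' ++ 1 :: b with hm
      have hmne : m ≠ [] := by simp [hm]
      have hX2 : 0 < cnt (m ++ [c]) := hposN m ((List.suffix_cons e m).trans (by simp [hm]))
      have hbase' : cnt (m ++ [c]) + 1 ≤ cnt (m.tail ++ [c]) := by
        have h1 : (e :: a') ++ 1 :: b = e :: m := by simp [hm]
        rw [h1, List.tail_cons] at hbase
        have h2 : cnt ((e :: m) ++ [c]) = e * cnt (m ++ [c]) - cnt (m.tail ++ [c]) := by
          rw [List.cons_append, cnt_cons e (m ++ [c]) (by simp),
            tail_append_singleton m c hmne]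
        rw [h2] at hbase
        nlinarith
      exact ih (fun x hx => hent x (by simp [hx]))
        (fun w hw => hposN w (hw.trans ((List.suffix_cons e m).trans (by simp [hm]))))
        hbase' d hd'

/-- forward growth facts for the new tuple (zone a, last entry c-1). -/
lemma Rp (b : List ℤ) (c : ℤ) :
    ∀ a : List ℤ, (∀ e ∈ a, 2 ≤ e) →
      (0 ≤ cnt ((a ++ 1 :: b) ++ [c - 1]) ∧
        cnt ((a ++ 1 :: b) ++ [c - 1]) < cnt ((a ++ 1 :: b).tail ++ [c - 1])) →
      ∀ d, d <:+ a → 0 ≤ cnt ((d ++ 1 :: b) ++ [c - 1]) ∧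
        cnt ((d ++ 1 :: b) ++ [c - 1]) < cnt ((d ++ 1 :: b).tail ++ [c - 1]) := by
  intro a
  induction a with
  | nil =>
    intro _ hbase d hd
    rw [List.suffix_nil.mp hd]
    exact hbase
  | cons e a' ih =>
    intro hent hbase d hd
    rcases List.suffix_cons_iff.mp hd with rfl | hd'
    · exact hbase
    · have he : 2 ≤ e := hent e (by simp)
      set m : List ℤ := a' ++ 1 :: b with hm
      have hmne : m ≠ [] := by simp [hm]
      have hbase' : 0 ≤ cnt (m ++ [c - 1]) ∧
          cnt (m ++ [c - 1]) < cnt (m.tail ++ [c - 1]) := by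
        have h1 : (e :: a') ++ 1 :: b = e :: m := by simp [hm]
        rw [h1, List.tail_cons] at hbase
        have h2 : cnt ((e :: m) ++ [c - 1]) = e * cnt (m ++ [c - 1]) - cnt (m.tail ++ [c - 1]) := by
          rw [List.cons_append, cnt_cons e (m ++ [c - 1]) (by simp),
            tail_append_singleton m (c - 1) hmne]
        obtain ⟨hb1, hb2⟩ := hbase
        rw [h2] at hb1 hb2
        constructor
        · nlinarith
        · nlinarith
      exact ih (fun x hx => hent x (by simp [hx])) hbase' d hd'

/-- the telescoping inequality. -/
lemma TS (b : List ℤ) (c : ℤ) (a : List ℤ)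
    (hposN : ∀ w, w <:+ a ++ 1 :: b → 0 < cnt (w ++ [c]))
    (hG : ∀ d, d <:+ a → cnt ((d ++ 1 :: b) ++ [c]) + 1 ≤ cnt ((d ++ 1 :: b).tail ++ [c]))
    (hNb : 0 < cnt b) :
    ∀ d, d <:+ a → 0 < cnt (d ++ 1 :: b) ∧
      cnt (d ++ 1 :: b) * cnt (b ++ [c]) + (1 - cnt b) * cnt ((d ++ 1 :: b) ++ [c])
        ≤ cnt (b ++ [c]) := by
  have h1b : (1 : ℤ) :: b <:+ a ++ 1 :: b := ⟨a, rfl⟩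
  have hscb : b <:+ a ++ 1 :: b := (List.suffix_cons 1 b).trans h1b
  have hNcb : 0 < cnt (b ++ [c]) := hposN b hscb
  intro d
  induction d with
  | nil =>
    intro _
    simp only [List.nil_append]
    have W := wronsk c (1 :: b) (by simp)
    rw [List.tail_cons] at W
    have G0 := hG [] ⟨a, by simp⟩
    simp only [List.nil_append, List.tail_cons] at G0
    have hNc1b : 0 < cnt ((1 :: b) ++ [c]) := hposN (1 :: b) h1b
    constructor
    · nlinarith
    · nlinarith
  | cons e d ih =>
    intro hsuf
    have hd : d <:+ a := (List.suffix_cons e d).trans hsuf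
    obtain ⟨ihp, ih2⟩ := ih hd
    set v' : List ℤ := d ++ 1 :: b with hv'
    have hvv : (e :: d) ++ 1 :: b = e :: v' := by simp [hv']
    rw [hvv]
    have hv'ne : v' ≠ [] := by simp [hv']
    have W := wronsk c (e :: v') (by simp)
    rw [List.tail_cons] at W
    have G := hG (e :: d) hsuf
    rw [hvv, List.tail_cons] at G
    have hNcv : 0 < cnt ((e :: v') ++ [c]) := by
      have := hposN ((e :: d) ++ 1 :: b) (suffix_append_right' (1 :: b) hsuf)
      rwa [hvv] at this
    have hNcv' : 0 < cnt (v' ++ [c]) := hposN v' (suffix_append_right' (1 :: b) hd)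
    constructor
    · nlinarith
    · have W' : cnt (e :: v') * cnt (v' ++ [c]) = 1 + cnt ((e :: v') ++ [c]) * cnt v' := by
        linarith
      have W2 : cnt (e :: v') * cnt (v' ++ [c]) * cnt (b ++ [c])
          = (1 + cnt ((e :: v') ++ [c]) * cnt v') * cnt (b ++ [c]) := by rw [W']
      have P1 := mul_le_mul_of_nonneg_left ih2 hNcv.le
      have P2 := mul_le_mul_of_nonneg_left G hNcb.le
      have key : (cnt (e :: v') * cnt (b ++ [c]) + (1 - cnt b) * cnt ((e :: v') ++ [c]))
          * cnt (v' ++ [c]) ≤ cnt (b ++ [c]) * cnt (v' ++ [c]) := by nlinarith [W2, P1, P2]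
      exact le_of_mul_le_mul_right key hNcv'

lemma first_split {x : ℤ} : ∀ {l : List ℤ}, x ∈ l → ∃ s t, l = s ++ x :: t ∧ x ∉ s := by
  intro l
  induction l with
  | nil => intro h; simp at h
  | cons h l' ih =>
    intro hm
    by_cases hx : h = x
    · exact ⟨[], l', by rw [hx]; rfl, by simp⟩
    · have : x ∈ l' := by
        rcases List.mem_cons.mp hm with h1 | h1
        · exact absurd h1.symm hx
        · exact h1
      obtain ⟨s, t, rfl, hns⟩ := ih this
      exact ⟨h :: s, t, by simp, by
        simp only [List.mem_cons, not_or]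
        exact ⟨fun he => hx he.symm, hns⟩⟩

lemma get_mid (X Y : List ℤ) (x : ℤ) (h : X.length < (X ++ x :: Y).length) :
    (X ++ x :: Y).get ⟨X.length, h⟩ = x := by
  rw [List.get_eq_getElem]
  rw [List.getElem_append_right (le_refl X.length)]
  simp

lemma get_of_split {L X Y : List ℤ} {x : ℤ} (h : L = X ++ x :: Y)
    (hlen : X.length < L.length) : L.get ⟨X.length, hlen⟩ = x := by
  subst h; exact get_mid X Y x hlen

/-- Let `k ≥ 4` and let `(n_1, …, n_k) = (2, u_1, …, u_{k-2}, c)` be an admissible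
`k`-tuple of positive integers with `[n_1, …, n_k] = 0`, having exactly one index `j`
with `n_j = 1`, first entry `n_1 = 2` and last entry `n_k = c > 2`.  Then the
`(k-1)`-tuple `(n_2, …, n_{k-1}, n_k - 1) = (u_1, …, u_{k-2}, c - 1)` is admissible and
its continued fraction vanishes. -/
theorem stmt8 (u : List ℤ) (c : ℤ) (hk : 4 ≤ (2 :: (u ++ [c])).length)
    (hpos : ∀ x ∈ 2 :: (u ++ [c]), 0 < x)
    (hadm : Admissible (2 :: (u ++ [c]))) (hcf : cfI (2 :: (u ++ [c])) = 0)
    (hc : 2 < c)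
    (j : Fin (2 :: (u ++ [c])).length) (hj : (2 :: (u ++ [c])).get j = 1)
    (huniq : ∀ i : Fin (2 :: (u ++ [c])).length, (2 :: (u ++ [c])).get i = 1 → i = j) :
    Admissible (u ++ [c - 1]) ∧ cfI (u ++ [c - 1]) = 0 := by
  classical
  -- locate the 1 inside u
  have h1L : (1:ℤ) ∈ 2 :: (u ++ [c]) := by
    rw [← hj]; exact List.get_mem _ j
  have h1u : (1:ℤ) ∈ u := by
    rcases List.mem_cons.mp h1L with h | h
    · norm_num at h
    · rcases List.mem_append.mp h with h | h
      · exact h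
      · simp at h; omega
  obtain ⟨a, b, hu, hna⟩ := first_split h1u
  subst hu
  -- entry bounds
  have hA : ∀ e ∈ a, 2 ≤ e := by
    intro e he
    have hpe : 0 < e := hpos e (by
      simp only [List.mem_cons, List.mem_append]; tauto)
    have : e ≠ 1 := fun h => hna (h ▸ he)
    omega
  have hB : ∀ e ∈ b, 2 ≤ e := by
    intro e he
    have hpe : 0 < e := hpos e (by
      simp only [List.mem_cons, List.mem_append]; tauto)
    by_contra hlt
    have he1 : (1:ℤ) ∈ b := by
      have : e = 1 := by omega
      exact this ▸ he
    obtain ⟨b₁, b₂, rfl⟩ := List.append_of_mem he1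
    have hsplit1 : 2 :: ((a ++ 1 :: (b₁ ++ 1 :: b₂)) ++ [c])
        = (2 :: a) ++ 1 :: ((b₁ ++ 1 :: b₂) ++ [c]) := by simp
    have hsplit2 : 2 :: ((a ++ 1 :: (b₁ ++ 1 :: b₂)) ++ [c])
        = ((2 :: a) ++ 1 :: b₁) ++ 1 :: (b₂ ++ [c]) := by simp
    have hl1 : (2 :: a).length < (2 :: ((a ++ 1 :: (b₁ ++ 1 :: b₂)) ++ [c])).length := by
      simp only [List.length_cons, List.length_append]; omega
    have hl2 : ((2 :: a) ++ 1 :: b₁).length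
        < (2 :: ((a ++ 1 :: (b₁ ++ 1 :: b₂)) ++ [c])).length := by
      simp only [List.length_cons, List.length_append]; omega
    have hg1 := get_of_split hsplit1 hl1
    have hg2 := get_of_split hsplit2 hl2
    have e₁ := huniq _ hg1
    have e₂ := huniq _ hg2
    have := congrArg Fin.val (e₁.trans e₂.symm)
    simp at this
  -- suffix positivity of continuants (with last entry c)
  have hNpos : ∀ w, w <:+ a ++ 1 :: b → 0 < cnt (w ++ [c]) := by
    intro w hw
    have hsuf2 : w ++ [c] <:+ (a ++ 1 :: b) ++ [c] := suffix_append_right' [c] hw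
    have hsufL : w ++ [c] <:+ 2 :: ((a ++ 1 :: b) ++ [c]) :=
      hsuf2.trans (List.suffix_cons 2 _)
    refine (main1 (w ++ [c]) (by simp) ?_).1
    intro t ht hts
    have htL : t <:+ 2 :: ((a ++ 1 :: b) ++ [c]) := hts.trans hsufL
    have htne : t ≠ 2 :: ((a ++ 1 :: b) ++ [c]) := by
      intro h
      have h1 := hts.length_le
      have h2 := hsuf2.length_le
      rw [h] at h1
      simp at h1 h2
      omega
    exact hadm t ht htne htL
  -- value of cf of the tail
  have hqpos : 0 < cfI ((a ++ 1 :: b) ++ [c]) := by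
    refine hadm _ (by simp) ?_ (List.suffix_cons 2 _)
    intro h
    have := congrArg List.length h
    simp at this
  have hq12 : cfI ((a ++ 1 :: b) ++ [c]) = 1 / 2 := by
    rw [cfI_cons 2 _ (by simp)] at hcf
    have h1 : (1:ℚ) / cfI ((a ++ 1 :: b) ++ [c]) = 2 := by linarith
    rw [div_eq_iff (ne_of_gt hqpos)] at h1
    linarith
  -- continuant formula
  obtain ⟨hNcu_pos, hform⟩ := main1 ((a ++ 1 :: b) ++ [c]) (by simp)
    (by
      intro t ht hts
      refine hadm t ht ?_ (hts.trans (List.suffix_cons 2 _))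
      intro h
      have h1 := hts.length_le
      rw [h] at h1
      simp at h1)
  have htailc : ((a ++ 1 :: b) ++ [c]).tail = (a ++ 1 :: b).tail ++ [c] :=
    tail_append_singleton _ c (by simp)
  rw [htailc] at hform
  have hNctu_pos : 0 < cnt ((a ++ 1 :: b).tail ++ [c]) :=
    hNpos _ (List.tail_suffix _)
  have h2N : cnt ((a ++ 1 :: b).tail ++ [c]) = 2 * cnt ((a ++ 1 :: b) ++ [c]) := by
    have h := hform
    rw [hq12] at h
    have hyne : ((cnt ((a ++ 1 :: b).tail ++ [c]) : ℤ) : ℚ) ≠ 0 := by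
      have : (0:ℚ) < (cnt ((a ++ 1 :: b).tail ++ [c]) : ℚ) := by exact_mod_cast hNctu_pos
      exact this.ne'
    rw [div_eq_div_iff (by norm_num) hyne] at h
    have : ((cnt ((a ++ 1 :: b).tail ++ [c]) : ℤ) : ℚ)
        = 2 * ((cnt ((a ++ 1 :: b) ++ [c]) : ℤ) : ℚ) := by linarith
    exact_mod_cast this
  -- Wronskian pins the top continuant
  have W := wronsk c (a ++ 1 :: b) (by simp)
  have hfact : cnt ((a ++ 1 :: b) ++ [c])
      * (2 * cnt (a ++ 1 :: b) - cnt (a ++ 1 :: b).tail) = 1 := by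
    rw [h2N] at W
    linear_combination W
  obtain ⟨hNcu1, hrest⟩ : cnt ((a ++ 1 :: b) ++ [c]) = 1
      ∧ 2 * cnt (a ++ 1 :: b) - cnt (a ++ 1 :: b).tail = 1 := by
    rcases Int.mul_eq_one_iff_eq_one_or_neg_one.mp hfact with h | h
    · exact h
    · exfalso; omega
  -- forward growth facts
  have hG := Gf b c a hA hNpos (by rw [hNcu1, h2N, hNcu1]; norm_num)
  -- telescoping
  have hNb_pos := (zbM b hB).1
  obtain ⟨hNu_pos, hineq⟩ := TS b c a hNpos hG hNb_pos a List.suffix_rfl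
  rw [hNcu1, mul_one] at hineq
  have hzb := zb c hc b hB
  have hadd_b := addlast c b
  have hNcb_pos : 0 < cnt (b ++ [c]) := hNpos b ((List.suffix_cons 1 b).trans ⟨a, rfl⟩)
  -- the key conclusion: the continuant of u is 1
  have hNu1 : cnt (a ++ 1 :: b) = 1 := by
    by_contra hne
    have h2le : 2 ≤ cnt (a ++ 1 :: b) := by omega
    nlinarith [mul_le_mul_of_nonneg_right h2le hNcb_pos.le]
  have hNtu1 : cnt (a ++ 1 :: b).tail = 1 := by omega
  have hcnt0 : cnt ((a ++ 1 :: b) ++ [c - 1]) = 0 := by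
    have := addlast c (a ++ 1 :: b)
    omega
  have hNctu2 : cnt ((a ++ 1 :: b).tail ++ [c]) = 2 := by rw [h2N, hNcu1]; norm_num
  have hRt1 : cnt ((a ++ 1 :: b).tail ++ [c - 1]) = 1 := by
    have := addlast c ((a ++ 1 :: b).tail)
    omega
  have hRp := Rp b c a hA ⟨by rw [hcnt0], by rw [hcnt0, hRt1]; norm_num⟩
  -- positivity for all proper suffixes, with last entry c - 1
  have hR : ∀ w, w <:+ a ++ 1 :: b → w ≠ a ++ 1 :: b → 0 < cnt (w ++ [c - 1]) := by
    intro w hw hwne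
    rcases suffix_split hw with h1 | ⟨d, hd, rfl⟩
    · rcases List.suffix_cons_iff.mp h1 with rfl | h2
      · -- w = 1 :: b ; then a ≠ []
        have hane : ([] : List ℤ) ≠ a := by
          intro h; rw [← h] at hwne; simp at hwne
        obtain ⟨e, he⟩ := proper_suffix_ext (List.nil_suffix (l := a)) hane
        obtain ⟨hp1, hp2⟩ := hRp (e :: []) he
        simp only [List.cons_append, List.nil_append, List.tail_cons] at hp1 hp2 ⊢
        omega
      · -- w <:+ b
        obtain ⟨hz1, hz2⟩ := zb c hc w (fun e hew => hB e (h2.sublist.subset hew))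
        omega
    · have hdne : d ≠ a := by
        intro h; rw [h] at hwne; simp at hwne
      obtain ⟨e, he⟩ := proper_suffix_ext hd hdne
      obtain ⟨hp1, hp2⟩ := hRp (e :: d) he
      simp only [List.cons_append, List.tail_cons] at hp1 hp2 ⊢
      omega
  constructor
  · -- Admissibility of the new tuple
    intro t ht htne hsuf
    rcases suffix_split hsuf with h1 | ⟨w, hw, rfl⟩
    · have ht1 : t = [c - 1] := by
        rcases List.suffix_cons_iff.mp h1 with rfl | h2
        · rfl
        · exact absurd (List.suffix_nil.mp h2) ht
      rw [ht1]
      simp only [cfI_singleton]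
      have : (0:ℤ) < c - 1 := by omega
      exact_mod_cast this
    · by_cases hwnil : w = []
      · subst hwnil
        simp only [List.nil_append, cfI_singleton]
        have : (0:ℤ) < c - 1 := by omega
        exact_mod_cast this
      · have hwne : w ≠ a ++ 1 :: b := by
          intro h; rw [h] at htne; exact htne rfl
        have hcnt_t : 0 < cnt (w ++ [c - 1]) := hR w hw hwne
        have htail : (w ++ [c - 1]).tail = w.tail ++ [c - 1] :=
          tail_append_singleton w _ hwnil
        have hwt : w.tail <:+ a ++ 1 :: b := (List.tail_suffix w).trans hw
        have hwtne : w.tail ≠ a ++ 1 :: b := by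
          intro h
          have h1 := hw.length_le
          have h2 := congrArg List.length h
          cases w with
          | nil => exact hwnil rfl
          | cons x xs => simp at h1 h2; omega
        have hcnt_tt : 0 < cnt (w.tail ++ [c - 1]) := hR _ hwt hwtne
        have hform2 := main2 (w ++ [c - 1]) (by simp) (by
          intro s hs hsne hssuf
          rcases suffix_split hssuf with hs1 | ⟨w', hw', rfl⟩
          · have : s = [c - 1] := by
              rcases List.suffix_cons_iff.mp hs1 with rfl | h2
              · rfl
              · exact absurd (List.suffix_nil.mp h2) hs
            rw [this]; simpa using (by omega : (0:ℤ) < c - 1)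
          · refine hR w' (hw'.trans hw) ?_
            intro h
            have h1 := hw'.length_le
            have h2 := hw.length_le
            have h3 : w.length < (a ++ 1 :: b).length :=
              lt_of_le_of_ne h2 (fun hl => hwne (hw.eq_of_length hl))
            rw [h] at h1
            omega)
        rw [hform2, htail]
        have hq1 : (0:ℚ) < (cnt (w ++ [c - 1]) : ℚ) := by exact_mod_cast hcnt_t
        have hq2 : (0:ℚ) < (cnt (w.tail ++ [c - 1]) : ℚ) := by exact_mod_cast hcnt_tt
        exact div_pos hq1 hq2
  · -- the continued fraction vanishes
    have hform3 := main2 ((a ++ 1 :: b) ++ [c - 1]) (by simp) (by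
      intro s hs hsne hssuf
      rcases suffix_split hssuf with hs1 | ⟨w', hw', rfl⟩
      · have : s = [c - 1] := by
          rcases List.suffix_cons_iff.mp hs1 with rfl | h2
          · rfl
          · exact absurd (List.suffix_nil.mp h2) hs
        rw [this]; simpa using (by omega : (0:ℤ) < c - 1)
      · refine hR w' hw' ?_
        intro h
        rw [h] at hsne
        exact hsne rfl)
    rw [hform3, hcnt0]
    simp
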